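/- With ⟨x⟩_n = x(x+1)⋯(x+n−1) the rising factorial, the Bell-umbral evaluation of ⟨x⟩_n equals the Lah polynomial: e^{-x} Σ_{j≥0} ⟨j⟩_n x^j/j! = L_n(x) = Σ_{k=1}^n (n!/k!) C(n−1,k−1) x^k (for n ≥ 1). -/

import Mathlib

/-!
Vandermonde's identity applied to `C(j + n - 1, n)` expands the rising factorial in falling
factorials, `⟨j⟩_n = ∑_k (n!/k!) C(n-1, k-1) (j)_k`. Since `(j)_k` vanishes for `j < k`,
`∑_j (j)_k x^j / j! = x^k e^x` is the exponential series shifted by `k`, and summing over `k`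
gives the Lah polynomial times `e^x`.
-/

open Finset Nat

theorem Nat.ascFactorial_eq_sum_factorial_mul_choose_mul_choose {n : ℕ} (hn : 1 ≤ n) (j : ℕ) :
    j.ascFactorial n = ∑ k ∈ Icc 1 n, n ! * (n - 1).choose (k - 1) * j.choose k := by
  rw [ascFactorial_eq_factorial_mul_choose', show j + n - 1 = j + (n - 1) by omega,
    add_choose_eq, Finset.Nat.sum_antidiagonal_eq_sum_range_succ_mk, mul_sum,
    range_eq_Ico, sum_eq_sum_Ico_succ_bot (succ_pos n)]
  have first_vanishes : j.choose 0 * (n - 1).choose (n - 0) = 0 := by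
    simp [choose_eq_zero_of_lt (by omega : n - 1 < n)]
  rw [first_vanishes, mul_zero, zero_add]
  refine sum_congr rfl fun k hk => ?_
  rw [mem_Icc] at hk
  rw [show n - k = (n - 1) - (k - 1) by omega, choose_symm (by omega)]
  ring

theorem Real.hasSum_descFactorial_mul_pow_div_factorial (k : ℕ) (x : ℝ) :
    HasSum (fun j : ℕ => (j.descFactorial k : ℝ) * x ^ j / j !) (x ^ k * Real.exp x) := by
  rw [← hasSum_nat_add_iff' k]
  have initial_vanish : ∑ i ∈ range k, (i.descFactorial k : ℝ) * x ^ i / i ! = 0 :=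
    sum_eq_zero fun i hi => by simp [descFactorial_eq_zero_iff_lt.2 (mem_range.1 hi)]
  have shift (j : ℕ) :
      ((j + k).descFactorial k : ℝ) * x ^ (j + k) / (j + k)! = x ^ k * (x ^ j / j !) := by
    rw [← factorial_mul_descFactorial (le_add_left k j), Nat.add_sub_cancel, pow_add]
    push_cast
    field_simp
  simpa only [initial_vanish, sub_zero, shift, Real.exp_eq_exp_ℝ] using
    (NormedSpace.expSeries_div_hasSum_exp x).mul_left (x ^ k)

theorem Nat.cast_ascFactorial_eq_sum_lah_mul_descFactorial {n : ℕ} (hn : 1 ≤ n) (j : ℕ) :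
    (j.ascFactorial n : ℝ) =
      ∑ k ∈ Icc 1 n, (n ! / k ! : ℝ) * (n - 1).choose (k - 1) * j.descFactorial k := by
  rw [ascFactorial_eq_sum_factorial_mul_choose_mul_choose hn]
  push_cast
  refine sum_congr rfl fun k _ => ?_
  rw [descFactorial_eq_factorial_mul_choose]
  push_cast
  field_simp

/-- The Bell-umbral evaluation of the rising factorial `⟨x⟩_n` is the Lah polynomial:
for `n ≥ 1` and all real `x`,
`e^{-x} ∑_{j ≥ 0} ⟨j⟩_n x^j/j! = ∑_{k=1}^n (n!/k!) C(n−1,k−1) x^k`. -/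
theorem umbral_rising_factorial_eq_lah (n : ℕ) (hn : 1 ≤ n) (x : ℝ) :
    Real.exp (-x) *
        ∑' j : ℕ, (ascPochhammer ℝ n).eval (j : ℝ) * x ^ j / (j.factorial : ℝ)
      = ∑ k ∈ Finset.Icc 1 n,
          ((n.factorial : ℝ) / (k.factorial : ℝ)) * ((n - 1).choose (k - 1) : ℝ) * x ^ k := by
  set lah : ℕ → ℝ := fun k => (n ! / k ! : ℝ) * (n - 1).choose (k - 1)
  have expand (j : ℕ) : (ascPochhammer ℝ n).eval (j : ℝ) * x ^ j / j ! =
      ∑ k ∈ Icc 1 n, lah k * ((j.descFactorial k : ℝ) * x ^ j / j !) := by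
    rw [← cast_ascFactorial, cast_ascFactorial_eq_sum_lah_mul_descFactorial hn, sum_mul, sum_div]
    simp only [lah, mul_assoc, mul_div_assoc]
  have hsum : HasSum (fun j : ℕ => (ascPochhammer ℝ n).eval (j : ℝ) * x ^ j / j !)
      (∑ k ∈ Icc 1 n, lah k * (x ^ k * Real.exp x)) := by
    simpa only [expand] using
      hasSum_sum fun k _ => (Real.hasSum_descFactorial_mul_pow_div_factorial k x).mul_left (lah k)
  rw [hsum.tsum_eq, mul_sum]
  refine sum_congr rfl fun k _ => ?_
  simp only [lah, Real.exp_neg]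
  field_simp
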